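/- arXiv:2212.10634 — 2 statements merged into one kernel-verified Lean document; each statement's English description precedes it below -/
import Mathlib

section
/- For a stabilizer state ρ on an L-qubit chain with stabilizer generators S in the clipped gauge, the von Neumann entropy of any contiguous region A equals |A| minus the number of generators g in S whose support interval [l(g), r(g)] is contained in A. -/
/-!
STATEMENT 0: For a stabilizer state ρ on an L-qubit chain, ρ = 2^{-L} Σ_{g∈G} g with G
the abelian group (not containing -I) generated by an independent set S of (signed)
Pauli-string generators in the clipped gauge, the von Neumann entropy of any contiguous
region A equals |A| minus the number of generators g ∈ S whose support interval
[l(g), r(g)] is contained in A.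

Generators are modelled as a sign (Bool) together with a Pauli content Fin L → Fin 4
(0 = I, 1 = X, 2 = Y, 3 = Z).  Since A is an interval, the support interval [l(g), r(g)]
is contained in A iff the support of g is contained in A.
-/

open scoped BigOperators Classical

namespace Stmt0

/-- The four single-qubit Pauli matrices I, X, Y, Z. -/
noncomputable def pauliMat : Fin 4 → Matrix (Fin 2) (Fin 2) ℂ :=
  ![1, !![0, 1; 1, 0], !![0, -Complex.I; Complex.I, 0], !![1, 0; 0, -1]]

/-- The Pauli string with content `f` on the qubit chain `Fin L`. -/
noncomputable def pauliString {L : ℕ} (f : Fin L → Fin 4) :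
    Matrix (Fin L → Fin 2) (Fin L → Fin 2) ℂ :=
  fun x y => ∏ i, pauliMat (f i) (x i) (y i)

/-- The matrix of a signed Pauli-string generator. -/
noncomputable def genMat {L : ℕ} (g : Bool × (Fin L → Fin 4)) :
    Matrix (Fin L → Fin 2) (Fin L → Fin 2) ℂ :=
  (if g.1 then (-1 : ℂ) else 1) • pauliString g.2

/-- The group element of the stabilizer group labelled by the subset `T` of generators:
the product Π_{j ∈ T} g_j (well defined since the generators commute). -/
noncomputable def groupElem {L m : ℕ} (gen : Fin m → Bool × (Fin L → Fin 4))
    (hcomm : ∀ j k, Commute (genMat (gen j)) (genMat (gen k))) (T : Finset (Fin m)) :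
    Matrix (Fin L → Fin 2) (Fin L → Fin 2) ℂ :=
  T.noncommProd (fun j => genMat (gen j)) (fun j _ k _ _ => hcomm j k)

/-- The stabilizer state ρ = 2^{-L} Σ_{g ∈ G} g. -/
noncomputable def stabState {L m : ℕ} (gen : Fin m → Bool × (Fin L → Fin 4))
    (hcomm : ∀ j k, Commute (genMat (gen j)) (genMat (gen k))) :
    Matrix (Fin L → Fin 2) (Fin L → Fin 2) ℂ :=
  ((2 : ℂ) ^ L)⁻¹ • ∑ T : Finset (Fin m), groupElem gen hcomm T

/-- `i` is the left endpoint l(g) of the Pauli content `f`. -/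
def isLeftEnd {L : ℕ} (f : Fin L → Fin 4) (i : Fin L) : Prop :=
  f i ≠ 0 ∧ ∀ k, f k ≠ 0 → i ≤ k

/-- `i` is the right endpoint r(g) of the Pauli content `f`. -/
def isRightEnd {L : ℕ} (f : Fin L → Fin 4) (i : Fin L) : Prop :=
  f i ≠ 0 ∧ ∀ k, f k ≠ 0 → k ≤ i

/-- The generating set (indexed by `Fin m`) is in the clipped gauge: at every site the
number of left endpoints plus the number of right endpoints is at most 2, and whenever
two generators share a left (or right) endpoint their Pauli operators there differ. -/
def ClippedGauge {L m : ℕ} (gen : Fin m → Bool × (Fin L → Fin 4)) : Prop :=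
  (∀ i : Fin L,
      (Finset.univ.filter fun j => isLeftEnd (gen j).2 i).card
        + (Finset.univ.filter fun j => isRightEnd (gen j).2 i).card ≤ 2) ∧
  (∀ i : Fin L, ∀ j k, j ≠ k → isLeftEnd (gen j).2 i → isLeftEnd (gen k).2 i →
      (gen j).2 i ≠ (gen k).2 i) ∧
  (∀ i : Fin L, ∀ j k, j ≠ k → isRightEnd (gen j).2 i → isRightEnd (gen k).2 i →
      (gen j).2 i ≠ (gen k).2 i)

/-- Merge an assignment on `A` with an assignment on its complement. -/
def mergeFun {ι : Type*} [DecidableEq ι] (A : Finset ι)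
    (a : {i // i ∈ A} → Fin 2) (c : {i // i ∉ A} → Fin 2) (i : ι) : Fin 2 :=
  if h : i ∈ A then a ⟨i, h⟩ else c ⟨i, h⟩

/-- Partial trace keeping only the qubits in region `A`. -/
noncomputable def ptrace {ι : Type*} [Fintype ι] [DecidableEq ι] (A : Finset ι)
    (ρ : Matrix (ι → Fin 2) (ι → Fin 2) ℂ) :
    Matrix ({i // i ∈ A} → Fin 2) ({i // i ∈ A} → Fin 2) ℂ :=
  fun a b => ∑ c : {i // i ∉ A} → Fin 2, ρ (mergeFun A a c) (mergeFun A b c)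

/-- Von Neumann entropy (in bits) of a Hermitian matrix, via its eigenvalues. -/
noncomputable def vnEntropy {n : Type*} [Fintype n] [DecidableEq n] (ρ : Matrix n n ℂ) : ℝ :=
  if h : ρ.IsHermitian then (∑ i, Real.negMulLog (h.eigenvalues i)) / Real.log 2 else 0

/-- Entanglement entropy of the region `A` in the state `ρ`. -/
noncomputable def entRegion {ι : Type*} [Fintype ι] [DecidableEq ι]
    (ρ : Matrix (ι → Fin 2) (ι → Fin 2) ℂ) (A : Finset ι) : ℝ :=
  vnEntropy (ptrace A ρ)

/-!
Every element `g_T = ∏_{j ∈ T} g_j` of the stabilizer group is `±` a Pauli string, and the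
partial trace onto `A` kills every Pauli string acting nontrivially outside `A`. In the clipped
gauge `g_T` acts trivially outside the interval `A` only if every factor of `T` is supported in
`A`: at the leftmost (or rightmost) site of the joint support of `T` at most two generators of
`T` end, with distinct Paulis, so they cannot cancel there. Hence `ρ_A` is, up to a scalar, the
restriction to `A` of `∑_{T ⊆ K} g_T`, where `K` is the set of generators supported in `A`.
Since `g_S g_T = g_{S ∆ T}`, this sum squares to `2^|K|` times itself, so
`ρ_A² = 2^(|K| - |A|) ρ_A`, and a trace-one matrix with this property has entropy `|A| - |K|`.
-/

open scoped symmDiff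

section PauliAlgebra

/-- The labels `I, X, Y, Z` as vectors `(0,0), (1,0), (1,1), (0,1)` over `𝔽₂`: Pauli matrices
multiply, up to the phase `pauliPhase`, as their vectors add. -/
def pauliVec : Fin 4 ≃ ZMod 2 × ZMod 2 where
  toFun := ![(0, 0), (1, 0), (1, 1), (0, 1)]
  invFun v := if v = (0, 0) then 0 else if v = (1, 0) then 1 else if v = (1, 1) then 2 else 3
  left_inv := by decide
  right_inv := by decide

def pauliPhase : Fin 4 → Fin 4 → ℂ :=
  ![![1, 1, 1, 1], ![1, 1, Complex.I, -Complex.I], ![1, -Complex.I, 1, Complex.I],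
    ![1, Complex.I, -Complex.I, 1]]

lemma pauliMat_mul (p q : Fin 4) :
    pauliMat p * pauliMat q =
      pauliPhase p q • pauliMat (pauliVec.symm (pauliVec p + pauliVec q)) := by
  fin_cases p <;> fin_cases q <;>
    · ext i j
      fin_cases i <;> fin_cases j <;>
        simp [pauliMat, pauliPhase, pauliVec, Matrix.mul_apply, CharTwo.add_self_eq_zero]

lemma pauliPhase_self (p : Fin 4) : pauliPhase p p = 1 := by
  fin_cases p <;> simp [pauliPhase]

lemma pauliVec_eq_zero {p : Fin 4} : pauliVec p = 0 ↔ p = 0 := by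
  revert p; decide

lemma pauliVec_add_ne_zero {p q : Fin 4} (hp : p ≠ 0) (hpq : p ≠ q) :
    pauliVec p + pauliVec q ≠ 0 := by
  revert p q; decide

lemma sum_pauliVec_ne_zero {κ : Type*} {W : Finset κ} {v : κ → Fin 4} (hW : W.Nonempty)
    (hcard : W.card ≤ 2) (hv : ∀ j ∈ W, v j ≠ 0)
    (hinj : ∀ j ∈ W, ∀ k ∈ W, j ≠ k → v j ≠ v k) :
    ∑ j ∈ W, pauliVec (v j) ≠ 0 := by
  obtain h | h : W.card = 1 ∨ W.card = 2 := by have := hW.card_pos; omega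
  · obtain ⟨a, rfl⟩ := Finset.card_eq_one.mp h
    simpa [pauliVec_eq_zero] using hv a
  · obtain ⟨a, b, hab, rfl⟩ := Finset.card_eq_two.mp h
    rw [Finset.sum_pair hab]
    exact pauliVec_add_ne_zero (hv a (by simp)) (hinj a (by simp) b (by simp) hab)

lemma pauliMat_conjTranspose (p : Fin 4) : (pauliMat p).conjTranspose = pauliMat p := by
  fin_cases p <;> ext i j <;> fin_cases i <;> fin_cases j <;> simp [pauliMat]

lemma trace_pauliMat (p : Fin 4) : (pauliMat p).trace = if p = 0 then 2 else 0 := by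
  fin_cases p <;> norm_num [pauliMat, Matrix.trace_fin_two]

end PauliAlgebra

section PauliString

variable {ι : Type*} [Fintype ι]

/-- `pauliString` on an arbitrary finite set of sites, so that strings can be restricted to a
region. -/
noncomputable def pauliStr (f : ι → Fin 4) : Matrix (ι → Fin 2) (ι → Fin 2) ℂ :=
  fun x y => ∏ i, pauliMat (f i) (x i) (y i)

lemma pauliStr_zero [DecidableEq ι] : pauliStr (0 : ι → Fin 4) = 1 := by
  ext x y
  simp [pauliStr, pauliMat, Matrix.one_apply, Finset.prod_boole, funext_iff]

lemma pauliStr_mul [DecidableEq ι] (f g : ι → Fin 4) :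
    pauliStr f * pauliStr g = (∏ i, pauliPhase (f i) (g i)) •
      pauliStr (fun i => pauliVec.symm (pauliVec (f i) + pauliVec (g i))) := by
  ext x y
  simp only [Matrix.mul_apply, pauliStr, Matrix.smul_apply, smul_eq_mul,
    ← Finset.prod_mul_distrib]
  rw [← Fintype.prod_sum (fun i t => pauliMat (f i) (x i) t * pauliMat (g i) t (y i))]
  simp only [← Matrix.mul_apply, pauliMat_mul, Matrix.smul_apply, smul_eq_mul]

lemma pauliStr_mul_self [DecidableEq ι] (f : ι → Fin 4) : pauliStr f * pauliStr f = 1 := by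
  have hsq : ∀ p : Fin 4, pauliVec.symm (pauliVec p + pauliVec p) = 0 := by decide
  simp [pauliStr_mul, pauliPhase_self, hsq, ← Pi.zero_def, pauliStr_zero]

lemma pauliStr_conjTranspose (f : ι → Fin 4) : (pauliStr f).conjTranspose = pauliStr f := by
  ext x y
  simp only [Matrix.conjTranspose_apply, pauliStr, star_prod]
  exact Finset.prod_congr rfl fun i _ => congrFun₂ (pauliMat_conjTranspose (f i)) (x i) (y i)

lemma trace_pauliStr [DecidableEq ι] (f : ι → Fin 4) :
    (pauliStr f).trace = ∏ i, (pauliMat (f i)).trace := by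
  simp only [Matrix.trace, Matrix.diag, pauliStr, Fintype.prod_sum]

lemma trace_pauliStr_eq_zero [DecidableEq ι] {f : ι → Fin 4} (hf : f ≠ 0) :
    (pauliStr f).trace = 0 := by
  obtain ⟨i, hi⟩ := Function.ne_iff.mp hf
  rw [trace_pauliStr]
  exact Finset.prod_eq_zero (Finset.mem_univ i) (by simpa [trace_pauliMat] using hi)

lemma filter_ne_zero_subset_iff {f : ι → Fin 4} {A : Finset ι} :
    Finset.univ.filter (f · ≠ 0) ⊆ A ↔ ∀ i ∉ A, f i = 0 := by
  simp [Finset.subset_iff, not_imp_comm]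

end PauliString

section PartialTrace

variable {ι : Type*} [Fintype ι] [DecidableEq ι] (A : Finset ι)

def mergeEquiv : ({i // i ∈ A} → Fin 2) × ({i // i ∉ A} → Fin 2) ≃ (ι → Fin 2) :=
  (Equiv.piEquivPiSubtypeProd (· ∈ A) fun _ => Fin 2).symm

/-- `Y ↦ Y ⊗ 1`, acting as the identity on the sites outside `A`. -/
noncomputable def tensorId :
    Matrix ({i // i ∈ A} → Fin 2) ({i // i ∈ A} → Fin 2) ℂ →ₐ[ℂ]
      Matrix (ι → Fin 2) (ι → Fin 2) ℂ :=
  (Matrix.reindexAlgEquiv ℂ ℂ (mergeEquiv A)).toAlgHom.comp <|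
    (Matrix.kroneckerAlgEquiv ({i // i ∈ A} → Fin 2) ({i // i ∉ A} → Fin 2)
      ℂ).toAlgHom.comp Algebra.TensorProduct.includeLeft

lemma tensorId_apply (Y : Matrix ({i // i ∈ A} → Fin 2) ({i // i ∈ A} → Fin 2) ℂ)
    (a b c c') :
    tensorId A Y (mergeFun A a c) (mergeFun A b c') = Y a b * (1 : Matrix _ _ ℂ) c c' := by
  change tensorId A Y (mergeEquiv A (a, c)) (mergeEquiv A (b, c')) = _
  simp [tensorId]

lemma ptrace_tensorId (Y : Matrix ({i // i ∈ A} → Fin 2) ({i // i ∈ A} → Fin 2) ℂ) :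
    ptrace A (tensorId A Y) = (2 ^ Fintype.card {i // i ∉ A} : ℂ) • Y := by
  ext a b
  simp [ptrace, tensorId_apply, mul_comm]

lemma ptrace_smul (c : ℂ) (X : Matrix (ι → Fin 2) (ι → Fin 2) ℂ) :
    ptrace A (c • X) = c • ptrace A X := by
  ext a b
  simp [ptrace, Finset.mul_sum]

lemma ptrace_sum {κ : Type*} (s : Finset κ)
    (X : κ → Matrix (ι → Fin 2) (ι → Fin 2) ℂ) :
    ptrace A (∑ k ∈ s, X k) = ∑ k ∈ s, ptrace A (X k) := by
  ext a b
  simp only [ptrace, Matrix.sum_apply]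
  exact Finset.sum_comm

lemma trace_ptrace (X : Matrix (ι → Fin 2) (ι → Fin 2) ℂ) :
    (ptrace A X).trace = X.trace := by
  simp only [Matrix.trace, Matrix.diag, ptrace]
  rw [← Fintype.sum_prod_type']
  exact (mergeEquiv A).sum_comp fun x => X x x

lemma isHermitian_ptrace {X : Matrix (ι → Fin 2) (ι → Fin 2) ℂ} (hX : X.IsHermitian) :
    (ptrace A X).IsHermitian := by
  ext a b
  simp only [Matrix.conjTranspose_apply, ptrace, star_sum]
  exact Finset.sum_congr rfl fun c _ => congrFun₂ hX _ _

lemma pauliStr_mergeFun (f : ι → Fin 4) (a b c c') :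
    pauliStr f (mergeFun A a c) (mergeFun A b c') =
      pauliStr (fun i : {i // i ∈ A} => f i) a b *
        pauliStr (fun i : {i // i ∉ A} => f i) c c' := by
  rw [pauliStr, ← Fintype.prod_subtype_mul_prod_subtype (· ∈ A)]
  congr 1
  · exact Finset.prod_congr (by ext; simp) fun i _ => by simp only [mergeFun, dif_pos i.2]
  · exact Fintype.prod_congr _ _ fun i => by simp only [mergeFun, dif_neg i.2]

lemma ptrace_pauliStr (f : ι → Fin 4) :
    ptrace A (pauliStr f) = (pauliStr fun i : {i // i ∉ A} => f i).trace •
      pauliStr (fun i : {i // i ∈ A} => f i) := by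
  ext a b
  simp [ptrace, pauliStr_mergeFun, Matrix.trace, Finset.mul_sum, mul_comm]

lemma pauliStr_eq_tensorId {f : ι → Fin 4} (hf : ∀ i ∉ A, f i = 0) :
    pauliStr f = tensorId A (pauliStr fun i : {i // i ∈ A} => f i) := by
  have hout : (fun i : {i // i ∉ A} => f i) = 0 := funext fun i => hf i i.2
  ext x y
  obtain ⟨⟨a, c⟩, rfl⟩ := (mergeEquiv A).surjective x
  obtain ⟨⟨b, c'⟩, rfl⟩ := (mergeEquiv A).surjective y
  change pauliStr f (mergeFun A a c) (mergeFun A b c') =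
    tensorId A _ (mergeFun A a c) (mergeFun A b c')
  rw [pauliStr_mergeFun, tensorId_apply, hout, pauliStr_zero]

lemma tensorId_injective : Function.Injective (tensorId A) := fun Y Z h => by
  have h' := congrArg (ptrace A) h
  rwa [ptrace_tensorId, ptrace_tensorId, smul_right_inj (pow_ne_zero _ two_ne_zero)] at h'

end PartialTrace

lemma sum_powerset_mul_self {R α : Type*} [Semiring R] [DecidableEq α] (f : Finset α → R)
    (hf : ∀ S T, f S * f T = f (S ∆ T)) (K : Finset α) :
    (∑ T ∈ K.powerset, f T) * ∑ T ∈ K.powerset, f T =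
      2 ^ K.card • ∑ T ∈ K.powerset, f T := by
  have hmem : ∀ S ∈ K.powerset, ∀ T ∈ K.powerset, S ∆ T ∈ K.powerset := fun S hS T hT =>
    Finset.mem_powerset.2 <| Finset.symmDiff_subset_union.trans <|
      Finset.union_subset (Finset.mem_powerset.1 hS) (Finset.mem_powerset.1 hT)
  have hrow : ∀ S ∈ K.powerset, ∑ T ∈ K.powerset, f S * f T = ∑ T ∈ K.powerset, f T :=
    fun S hS => Finset.sum_nbij' (S ∆ ·) (S ∆ ·) (hmem S hS) (hmem S hS)
      (fun T _ => symmDiff_symmDiff_cancel_left S T) (fun T _ => symmDiff_symmDiff_cancel_left S T)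
      (fun T _ => hf S T)
  rw [Finset.sum_mul_sum, Finset.sum_congr rfl hrow, Finset.sum_const, Finset.card_powerset]

section StabilizerGroup

variable {L m : ℕ} (gen : Fin m → Bool × (Fin L → Fin 4))
  (hcomm : ∀ j k, Commute (genMat (gen j)) (genMat (gen k)))

noncomputable def pauliContent (T : Finset (Fin m)) : Fin L → Fin 4 :=
  fun i => pauliVec.symm (∑ j ∈ T, pauliVec ((gen j).2 i))

lemma pauliContent_empty : pauliContent gen ∅ = 0 :=
  funext fun _ => by simp only [pauliContent, Finset.sum_empty]; rfl

lemma pauliContent_insert {j : Fin m} {T : Finset (Fin m)} (hj : j ∉ T) :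
    pauliContent gen (insert j T) =
      fun i => pauliVec.symm (pauliVec ((gen j).2 i) + pauliVec (pauliContent gen T i)) :=
  funext fun _ => by simp [pauliContent, Finset.sum_insert hj]

lemma pauliContent_eq_zero_iff {T : Finset (Fin m)} {i : Fin L} :
    pauliContent gen T i = 0 ↔ ∑ j ∈ T, pauliVec ((gen j).2 i) = 0 :=
  pauliVec.symm_apply_eq

lemma genMat_eq_smul_pauliStr (g : Bool × (Fin L → Fin 4)) :
    genMat g = (if g.1 then (-1 : ℂ) else 1) • pauliStr g.2 := rfl

lemma genMat_mul_self (g : Bool × (Fin L → Fin 4)) : genMat g * genMat g = 1 := by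
  rw [genMat_eq_smul_pauliStr, smul_mul_smul_comm, pauliStr_mul_self]
  cases g.1 <;> simp

lemma groupElem_empty : groupElem gen hcomm ∅ = 1 :=
  Finset.noncommProd_empty _ _

lemma groupElem_insert {j : Fin m} {T : Finset (Fin m)} (hj : j ∉ T) :
    groupElem gen hcomm (insert j T) = genMat (gen j) * groupElem gen hcomm T :=
  Finset.noncommProd_insert_of_notMem _ _ _ _ hj

lemma genMat_mul_groupElem (j : Fin m) (T : Finset (Fin m)) :
    genMat (gen j) * groupElem gen hcomm T = groupElem gen hcomm ({j} ∆ T) := by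
  by_cases hj : j ∈ T
  · have hT : {j} ∆ T = T.erase j := by
      ext k; by_cases hk : k = j <;> simp [Finset.mem_symmDiff, hk, hj]
    rw [hT, ← Finset.insert_erase hj, groupElem_insert gen hcomm (Finset.notMem_erase j T),
      ← mul_assoc, genMat_mul_self, one_mul, Finset.erase_insert (Finset.notMem_erase j T)]
  · have hT : {j} ∆ T = insert j T := by
      rw [Finset.symmDiff_eq_union (Finset.disjoint_singleton_left.mpr hj), Finset.insert_eq]
    rw [hT, groupElem_insert gen hcomm hj]

lemma groupElem_mul (T T' : Finset (Fin m)) :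
    groupElem gen hcomm T * groupElem gen hcomm T' = groupElem gen hcomm (T ∆ T') := by
  induction T using Finset.induction_on with
  | empty =>
    rw [groupElem_empty, one_mul, show (∅ : Finset (Fin m)) ∆ T' = T' from bot_symmDiff T']
  | insert j T hj ih =>
    rw [groupElem_insert gen hcomm hj, mul_assoc, ih, genMat_mul_groupElem, ← symmDiff_assoc,
      Finset.symmDiff_eq_union (Finset.disjoint_singleton_left.mpr hj), ← Finset.insert_eq]

lemma groupElem_mul_self (T : Finset (Fin m)) :
    groupElem gen hcomm T * groupElem gen hcomm T = 1 := by
  rw [groupElem_mul, symmDiff_self, Finset.bot_eq_empty, groupElem_empty]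

lemma exists_groupElem_eq_smul_pauliStr (T : Finset (Fin m)) :
    ∃ c : ℂ, groupElem gen hcomm T = c • pauliStr (pauliContent gen T) := by
  induction T using Finset.induction_on with
  | empty => exact ⟨1, by rw [groupElem_empty, pauliContent_empty, pauliStr_zero, one_smul]⟩
  | insert j T hj ih =>
    obtain ⟨c, hc⟩ := ih
    refine ⟨(if (gen j).1 then -1 else 1) * c *
      ∏ i, pauliPhase ((gen j).2 i) (pauliContent gen T i), ?_⟩
    rw [groupElem_insert gen hcomm hj, hc, genMat_eq_smul_pauliStr, smul_mul_smul_comm,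
      pauliStr_mul, smul_smul, pauliContent_insert gen hj]

lemma exists_groupElem_eq_sign_smul_pauliStr (T : Finset (Fin m)) :
    ∃ s : ℂ, (s = 1 ∨ s = -1) ∧
      groupElem gen hcomm T = s • pauliStr (pauliContent gen T) := by
  obtain ⟨s, hs⟩ := exists_groupElem_eq_smul_pauliStr gen hcomm T
  refine ⟨s, mul_self_eq_one_iff.mp ?_, hs⟩
  have h := groupElem_mul_self gen hcomm T
  rw [hs, smul_mul_smul_comm, pauliStr_mul_self] at h
  simpa using congrFun₂ h 0 0

lemma sum_powerset_groupElem_mem_range_tensorId {A : Finset (Fin L)}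
    {K : Finset (Fin m)} (hK : ∀ j ∈ K, ∀ i ∉ A, (gen j).2 i = 0) :
    ∑ T ∈ K.powerset, groupElem gen hcomm T ∈ (tensorId A).range := by
  have hgen : ∀ j ∈ K, genMat (gen j) ∈ (tensorId A).range := fun j hj =>
    (AlgHom.mem_range _).2
      ⟨(if (gen j).1 then (-1 : ℂ) else 1) • pauliStr fun i : A => (gen j).2 i,
        by rw [map_smul, ← pauliStr_eq_tensorId A (hK j hj)]; rfl⟩
  exact Subalgebra.sum_mem _ fun T hT => Submonoid.noncommProd_mem
    (tensorId A).range.toSubmonoid T _ _ fun j hj => hgen j (Finset.mem_powerset.1 hT hj)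

end StabilizerGroup

section StabilizerState

variable {L m : ℕ} {gen : Fin m → Bool × (Fin L → Fin 4)}
  {hcomm : ∀ j k, Commute (genMat (gen j)) (genMat (gen k))}

lemma isHermitian_groupElem (T : Finset (Fin m)) : (groupElem gen hcomm T).IsHermitian := by
  obtain ⟨s, hs, hg⟩ := exists_groupElem_eq_sign_smul_pauliStr gen hcomm T
  rw [hg]
  rcases hs with rfl | rfl <;>
    simp [Matrix.IsHermitian, pauliStr_conjTranspose]

lemma isHermitian_stabState : (stabState gen hcomm).IsHermitian := by
  simp [stabState, Matrix.IsHermitian, Matrix.conjTranspose_smul, Matrix.conjTranspose_sum,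
    fun T => (isHermitian_groupElem (hcomm := hcomm) T).eq]

lemma trace_groupElem_of_ne_empty (hindep : Function.Injective (groupElem gen hcomm))
    (hneg : ∀ T, groupElem gen hcomm T ≠ -1) {T : Finset (Fin m)} (hT : T ≠ ∅) :
    (groupElem gen hcomm T).trace = 0 := by
  obtain ⟨s, hs, hg⟩ := exists_groupElem_eq_sign_smul_pauliStr gen hcomm T
  by_cases hf : pauliContent gen T = 0
  · rw [hf, pauliStr_zero] at hg
    rcases hs with rfl | rfl
    · exact absurd (hindep (by rw [hg, one_smul, groupElem_empty])) hT
    · exact absurd (by rw [hg, neg_one_smul]) (hneg T)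
  · rw [hg, Matrix.trace_smul, trace_pauliStr_eq_zero hf, smul_zero]

lemma trace_stabState (hindep : Function.Injective (groupElem gen hcomm))
    (hneg : ∀ T, groupElem gen hcomm T ≠ -1) : (stabState gen hcomm).trace = 1 := by
  rw [stabState, Matrix.trace_smul, Matrix.trace_sum,
    Finset.sum_eq_single ∅ (fun T _ hT => trace_groupElem_of_ne_empty hindep hneg hT) (by simp),
    groupElem_empty, Matrix.trace_one]
  simp

end StabilizerState

section Entropy

variable {n : Type*} [Fintype n] [DecidableEq n] {B : Matrix n n ℂ}

open Polynomial in
lemma eigenvalues_eq_zero_or_eq_of_mul_self (hB : B.IsHermitian) {c : ℝ}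
    (hsq : B * B = (c : ℂ) • B) (i : n) : hB.eigenvalues i = 0 ∨ hB.eigenvalues i = c := by
  have : Nonempty n := ⟨i⟩
  have hspec := spectrum.subset_polynomial_aeval B (X ^ 2 - C c * X)
    ⟨_, hB.eigenvalues_mem_spectrum_real i, rfl⟩
  have h0 : aeval B (X ^ 2 - C c * X) = 0 := by
    simp [sq, hsq, ← Algebra.smul_def, Complex.coe_smul]
  rw [h0, spectrum.zero_eq, Set.mem_singleton_iff] at hspec
  simp only [eval_sub, eval_pow, eval_X, eval_mul, eval_C] at hspec
  have : hB.eigenvalues i * (hB.eigenvalues i - c) = 0 := by linear_combination hspec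
  simpa [sub_eq_zero] using this

lemma vnEntropy_eq_of_mul_self (hB : B.IsHermitian) {c : ℝ} (hsq : B * B = (c : ℂ) • B)
    (htr : B.trace = 1) : vnEntropy B = -Real.log c / Real.log 2 := by
  have hsum : ∑ i, hB.eigenvalues i = 1 := by
    simpa using congrArg Complex.re (hB.trace_eq_sum_eigenvalues.symm.trans htr)
  rw [vnEntropy, dif_pos hB]
  congr 1
  calc ∑ i, Real.negMulLog (hB.eigenvalues i) = ∑ i, hB.eigenvalues i * -Real.log c :=
        Finset.sum_congr rfl fun i _ => by
          rcases eigenvalues_eq_zero_or_eq_of_mul_self hB hsq i with h | h <;>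
            simp [h, Real.negMulLog]
    _ = -Real.log c := by rw [← Finset.sum_mul, hsum, one_mul]

end Entropy

section ClippedGauge

variable {L m : ℕ} {gen : Fin m → Bool × (Fin L → Fin 4)}

lemma pauliContent_ne_zero_of_endpoint (E : (Fin L → Fin 4) → Fin L → Prop) {i : Fin L}
    (hcard : (Finset.univ.filter fun j => E (gen j).2 i).card ≤ 2)
    (hdist : ∀ j k, j ≠ k → E (gen j).2 i → E (gen k).2 i → (gen j).2 i ≠ (gen k).2 i)
    {T : Finset (Fin m)} (hE : ∀ j ∈ T, (gen j).2 i ≠ 0 → E (gen j).2 i)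
    (hne : ∃ j ∈ T, (gen j).2 i ≠ 0) : pauliContent gen T i ≠ 0 := by
  set W := T.filter fun j => (gen j).2 i ≠ 0
  have hW : ∀ j ∈ W, (gen j).2 i ≠ 0 := fun j hj => (Finset.mem_filter.1 hj).2
  have hWE : ∀ j ∈ W, E (gen j).2 i := fun j hj => hE j (Finset.mem_filter.1 hj).1 (hW j hj)
  have hsum : ∑ j ∈ W, pauliVec ((gen j).2 i) = ∑ j ∈ T, pauliVec ((gen j).2 i) :=
    Finset.sum_filter_of_ne fun j _ h h0 => h (by rw [h0]; rfl)
  rw [Ne, pauliContent_eq_zero_iff, ← hsum]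
  obtain ⟨j, hj, hji⟩ := hne
  refine sum_pauliVec_ne_zero ⟨j, Finset.mem_filter.2 ⟨hj, hji⟩⟩ ?_ hW
    fun j hj k hk hjk => hdist j k hjk (hWE j hj) (hWE k hk)
  exact (Finset.card_le_card fun j hj =>
    Finset.mem_filter.2 ⟨Finset.mem_univ j, hWE j hj⟩).trans hcard

lemma ClippedGauge.eq_zero_of_pauliContent_eq_zero (hclip : ClippedGauge gen) {lo hi : Fin L}
    {T : Finset (Fin m)} (h0 : ∀ i ∉ Finset.Icc lo hi, pauliContent gen T i = 0)
    {j : Fin m} (hj : j ∈ T) {i : Fin L} (hi : i ∉ Finset.Icc lo hi) : (gen j).2 i = 0 := by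
  by_contra hji
  set U := Finset.univ.filter fun k => ∃ j ∈ T, (gen j).2 k ≠ 0
  have hU : ∀ {k}, k ∈ U ↔ ∃ j ∈ T, (gen j).2 k ≠ 0 := by simp [U]
  have hiU : i ∈ U := hU.2 ⟨j, hj, hji⟩
  simp only [Finset.mem_Icc, not_and_or, not_le] at hi
  rcases hi with hlt | hgt
  · set k := U.min' ⟨i, hiU⟩
    have hk : k ∉ Finset.Icc lo hi :=
      fun hk => not_le.2 ((U.min'_le i hiU).trans_lt hlt) (Finset.mem_Icc.1 hk).1
    exact pauliContent_ne_zero_of_endpoint isLeftEnd (le_self_add.trans (hclip.1 k)) (hclip.2.1 k)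
      (fun j' hj' h => ⟨h, fun k' hk' => U.min'_le k' (hU.2 ⟨j', hj', hk'⟩)⟩)
      (hU.1 (U.min'_mem _)) (h0 k hk)
  · set k := U.max' ⟨i, hiU⟩
    have hk : k ∉ Finset.Icc lo hi :=
      fun hk => not_le.2 (hgt.trans_le (U.le_max' i hiU)) (Finset.mem_Icc.1 hk).2
    exact pauliContent_ne_zero_of_endpoint isRightEnd (le_add_self.trans (hclip.1 k))
      (hclip.2.2 k)
      (fun j' hj' h => ⟨h, fun k' hk' => U.le_max' k' (hU.2 ⟨j', hj', hk'⟩)⟩)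
      (hU.1 (U.max'_mem _)) (h0 k hk)

variable {hcomm : ∀ j k, Commute (genMat (gen j)) (genMat (gen k))}

lemma ClippedGauge.ptrace_groupElem_eq_zero (hclip : ClippedGauge gen) {lo hi : Fin L}
    {T : Finset (Fin m)} (hT : ∃ j ∈ T, ∃ i ∉ Finset.Icc lo hi, (gen j).2 i ≠ 0) :
    ptrace (Finset.Icc lo hi) (groupElem gen hcomm T) = 0 := by
  obtain ⟨i, hi, hne⟩ : ∃ i ∉ Finset.Icc lo hi, pauliContent gen T i ≠ 0 := by
    by_contra! h
    obtain ⟨j, hj, i, hi, hne⟩ := hT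
    exact hne (hclip.eq_zero_of_pauliContent_eq_zero h hj hi)
  obtain ⟨s, -, hg⟩ := exists_groupElem_eq_sign_smul_pauliStr gen hcomm T
  rw [hg, ptrace_smul, ptrace_pauliStr,
    trace_pauliStr_eq_zero (Function.ne_iff.2 ⟨⟨i, hi⟩, hne⟩), zero_smul, smul_zero]

lemma ClippedGauge.ptrace_stabState (hclip : ClippedGauge gen) (lo hi : Fin L) :
    ptrace (Finset.Icc lo hi) (stabState gen hcomm) = ((2 : ℂ) ^ L)⁻¹ •
      ptrace (Finset.Icc lo hi) (∑ T ∈ (Finset.univ.filter fun j =>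
        ∀ i ∉ Finset.Icc lo hi, (gen j).2 i = 0).powerset, groupElem gen hcomm T) := by
  rw [stabState, ptrace_smul, ptrace_sum, ptrace_sum]
  congr 1
  refine (Finset.sum_subset (Finset.subset_univ _) fun T _ hT => ?_).symm
  exact hclip.ptrace_groupElem_eq_zero (by simpa [Finset.subset_iff] using hT)

lemma ClippedGauge.ptrace_stabState_mul_self (hclip : ClippedGauge gen) (lo hi : Fin L) :
    let A := Finset.Icc lo hi
    let K := Finset.univ.filter fun j => ∀ i ∉ A, (gen j).2 i = 0
    ptrace A (stabState gen hcomm) * ptrace A (stabState gen hcomm) =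
      ((2 ^ K.card / 2 ^ A.card : ℝ) : ℂ) • ptrace A (stabState gen hcomm) := by
  intro A K
  obtain ⟨Y, hY⟩ := (AlgHom.mem_range _).1 <|
    sum_powerset_groupElem_mem_range_tensorId gen hcomm (K := K) (A := A)
      fun j hj => (Finset.mem_filter.1 hj).2
  have hρ : ptrace A (stabState gen hcomm) =
      ((2 ^ L)⁻¹ * 2 ^ Fintype.card {i // i ∉ A} : ℂ) • Y := by
    rw [hclip.ptrace_stabState, ← hY, ptrace_tensorId, smul_smul]
  have hY2 : Y * Y = (2 ^ K.card : ℂ) • Y := tensorId_injective A <| by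
    rw [map_mul, map_smul, hY, sum_powerset_mul_self _ (groupElem_mul gen hcomm)]
    norm_cast
  have hL : (2 : ℂ) ^ L = 2 ^ A.card * 2 ^ Fintype.card {i // i ∉ A} := by
    rw [← pow_add, Fintype.card_subtype_compl, Fintype.card_coe, Fintype.card_fin,
      Nat.add_sub_cancel' (by simpa using A.card_le_univ)]
  rw [hρ, smul_mul_smul_comm, hY2, smul_smul, smul_smul, hL]
  push_cast; field_simp

end ClippedGauge

theorem clipped_gauge_entropy_formula {L m : ℕ}
    (gen : Fin m → Bool × (Fin L → Fin 4))
    -- the generators commute (G is abelian)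
    (hcomm : ∀ j k, Commute (genMat (gen j)) (genMat (gen k)))
    -- the generators are independent: distinct subsets give distinct group elements
    (hindep : Function.Injective (groupElem gen hcomm))
    -- the group does not contain -I
    (hneg : ∀ T : Finset (Fin m), groupElem gen hcomm T ≠ -1)
    -- the generating set is in the clipped gauge
    (hclip : ClippedGauge gen)
    -- A is a contiguous region (an interval)
    (lo hi : Fin L) :
    entRegion (stabState gen hcomm) (Finset.Icc lo hi)
      = ((Finset.Icc lo hi).card : ℝ)
        - (Finset.univ.filter fun j =>
            (Finset.univ.filter fun i => (gen j).2 i ≠ 0) ⊆ Finset.Icc lo hi).card := by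
  simp_rw [filter_ne_zero_subset_iff]
  rw [entRegion, vnEntropy_eq_of_mul_self (isHermitian_ptrace _ isHermitian_stabState)
    (hclip.ptrace_stabState_mul_self lo hi) (by rw [trace_ptrace, trace_stabState hindep hneg]),
    Real.log_div (by positivity) (by positivity), Real.log_pow, Real.log_pow]
  field_simp
  ring

end Stmt0
end

section
/- For a stabilizer channel E from system P to system Q with Choi state Φ_E, a Pauli operator O on P satisfies O = E†(Õ) for a Pauli operator Õ on Q if and only if Oᵀ ⊗ Õ is a stabilizer of Φ_E (i.e., tr(Φ_E · (Oᵀ ⊗ Õ)) = 1). -/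
/-!
STATEMENT 9: For a stabilizer channel E from system P to system Q (its adjoint E† maps
Pauli operators to Pauli operators) with Choi state
Φ_E = (1/dim P) Σ_{i,j} E(|i⟩⟨j|)_Q ⊗ (|i⟩⟨j|)_R  (R a copy of P),
a Pauli operator O on P satisfies O = E†(Õ) for a Pauli operator Õ on Q if and only if
Oᵀ ⊗ Õ is a stabilizer of Φ_E, i.e. tr(Φ_E · (Õ ⊗ Oᵀ)) = 1 (Õ acting on Q, Oᵀ on R).

Systems are collections of qubits: P has qubit set ιP (basis (ιP → Fin 2)) and Q has
qubit set ιQ.  The adjoint E† is encoded by a linear map E' together with the trace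
duality tr(E'(Y)·X) = tr(Y·E(X)).
-/

open scoped BigOperators Kronecker

namespace Stmt9

/-- The four single-qubit Pauli matrices I, X, Y, Z. -/
noncomputable def pauliMat : Fin 4 → Matrix (Fin 2) (Fin 2) ℂ :=
  ![1, !![0, 1; 1, 0], !![0, -Complex.I; Complex.I, 0], !![1, 0; 0, -1]]

/-- The Pauli string with content `f` on the qubit set `ι`. -/
noncomputable def pauliString {ι : Type*} [Fintype ι] (f : ι → Fin 4) :
    Matrix (ι → Fin 2) (ι → Fin 2) ℂ :=
  fun x y => ∏ i, pauliMat (f i) (x i) (y i)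

/-- A matrix is a Pauli operator if it is a Pauli string. -/
def IsPauli {ι : Type*} [Fintype ι] (M : Matrix (ι → Fin 2) (ι → Fin 2) ℂ) : Prop :=
  ∃ f : ι → Fin 4, M = pauliString f

/-- The Choi state of the channel E, on Q ⊗ R with R a copy of P. -/
noncomputable def choiState {ιP ιQ : Type*} [Fintype ιP] [DecidableEq ιP] [Fintype ιQ]
    (E : Matrix (ιP → Fin 2) (ιP → Fin 2) ℂ →ₗ[ℂ] Matrix (ιQ → Fin 2) (ιQ → Fin 2) ℂ) :
    Matrix ((ιQ → Fin 2) × (ιP → Fin 2)) ((ιQ → Fin 2) × (ιP → Fin 2)) ℂ :=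
  ((Fintype.card (ιP → Fin 2) : ℂ))⁻¹ •
    ∑ i : ιP → Fin 2, ∑ j : ιP → Fin 2,
      (E (Matrix.single i j 1)) ⊗ₖ (Matrix.single i j 1)

open Matrix

/-!
Pauli strings on `n` qubits are orthogonal for the trace pairing, `tr (P_f P_g) = 2ⁿ δ_{fg}`,
since the trace of a product of tensor products factors over the qubits. Expanding `O` in
matrix units shows `tr (Φ_E (Õ ⊗ Oᵀ)) = 2⁻ⁿ tr (E(O) Õ) = 2⁻ⁿ tr (E†(Õ) O)`. As `E†(Õ)` is again
a Pauli string, this is `1` when `E†(Õ) = O` and `0` otherwise.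
-/

theorem trace_pauliMat_mul_pauliMat (a b : Fin 4) :
    (pauliMat a * pauliMat b).trace = if a = b then 2 else 0 := by
  fin_cases a <;> fin_cases b <;>
    simp [pauliMat, trace_fin_two, one_fin_two, Complex.I_mul_I] <;> norm_num

theorem trace_of_prod_mul_of_prod {ι κ R : Type*} [Fintype ι] [DecidableEq ι] [Fintype κ]
    [CommSemiring R] (A B : ι → Matrix κ κ R) :
    (of (fun x y : ι → κ => ∏ i, A i (x i) (y i)) *
        of (fun x y : ι → κ => ∏ i, B i (x i) (y i))).trace =
      ∏ i, (A i * B i).trace := by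
  simp only [trace, diag, mul_apply, of_apply, Fintype.prod_sum, ← Finset.prod_mul_distrib]

theorem trace_pauliString_mul_pauliString {ι : Type*} [Fintype ι] [DecidableEq ι]
    (f g : ι → Fin 4) :
    (pauliString f * pauliString g).trace =
      if f = g then (Fintype.card (ι → Fin 2) : ℂ) else 0 := by
  refine (trace_of_prod_mul_of_prod (pauliMat ∘ f) (pauliMat ∘ g)).trans ?_
  simp only [Function.comp_apply, trace_pauliMat_mul_pauliMat]
  split_ifs with hfg
  · simp [hfg]
  · obtain ⟨i, hi⟩ := Function.ne_iff.mp hfg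
    exact Finset.prod_eq_zero (Finset.mem_univ i) (if_neg hi)

theorem trace_choiState_mul_kronecker
    {ιP ιQ : Type*} [Fintype ιP] [DecidableEq ιP] [Fintype ιQ] [DecidableEq ιQ]
    (E : Matrix (ιP → Fin 2) (ιP → Fin 2) ℂ →ₗ[ℂ] Matrix (ιQ → Fin 2) (ιQ → Fin 2) ℂ)
    (X : Matrix (ιP → Fin 2) (ιP → Fin 2) ℂ) (Y : Matrix (ιQ → Fin 2) (ιQ → Fin 2) ℂ) :
    (choiState E * (Y ⊗ₖ Xᵀ)).trace =
      (Fintype.card (ιP → Fin 2) : ℂ)⁻¹ * (E X * Y).trace := by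
  conv_rhs => rw [matrix_eq_sum_single X]
  simp only [choiState, smul_mul, trace_smul, smul_eq_mul, Finset.sum_mul, trace_sum,
    ← mul_kronecker_mul, trace_kronecker, trace_single_mul, transpose_apply, map_sum, one_mul]
  congr 1
  refine Finset.sum_congr rfl fun i _ => Finset.sum_congr rfl fun j _ => ?_
  rw [show single i j (X i j) = X i j • single i j (1 : ℂ) by simp, map_smul, smul_mul,
    trace_smul, smul_eq_mul, mul_comm]

theorem IsPauli.eq_iff_trace_mul_eq_card {ι : Type*} [Fintype ι] [DecidableEq ι]
    {A B : Matrix (ι → Fin 2) (ι → Fin 2) ℂ} (hA : IsPauli A) (hB : IsPauli B) :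
    A = B ↔ (A * B).trace = Fintype.card (ι → Fin 2) := by
  obtain ⟨f, rfl⟩ := hA
  obtain ⟨g, rfl⟩ := hB
  constructor
  · intro hfg
    rw [hfg, trace_pauliString_mul_pauliString, if_pos rfl]
  · rw [trace_pauliString_mul_pauliString]
    split_ifs with hfg
    · exact fun _ => congrArg pauliString hfg
    · exact fun h => absurd h.symm (Nat.cast_ne_zero.mpr Fintype.card_ne_zero)

theorem recoverable_iff_stabilizes_choi_general
    {ιP ιQ : Type*} [Fintype ιP] [DecidableEq ιP] [Fintype ιQ] [DecidableEq ιQ]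
    (E : Matrix (ιP → Fin 2) (ιP → Fin 2) ℂ →ₗ[ℂ] Matrix (ιQ → Fin 2) (ιQ → Fin 2) ℂ)
    (E' : Matrix (ιQ → Fin 2) (ιQ → Fin 2) ℂ →ₗ[ℂ] Matrix (ιP → Fin 2) (ιP → Fin 2) ℂ)
    -- E' is the adjoint E† of E with respect to the trace pairing
    (h_adj : ∀ X Y, (E' Y * X).trace = (Y * E X).trace)
    -- the adjoint maps Pauli operators to Pauli operators (stabilizer channel)
    (h_pauli : ∀ Y, IsPauli Y → IsPauli (E' Y))
    (O : Matrix (ιP → Fin 2) (ιP → Fin 2) ℂ) (hO : IsPauli O)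
    (Ot : Matrix (ιQ → Fin 2) (ιQ → Fin 2) ℂ) (hOt : IsPauli Ot) :
    O = E' Ot ↔ (choiState E * (Ot ⊗ₖ Oᵀ)).trace = 1 := by
  have hdim : (Fintype.card (ιP → Fin 2) : ℂ) ≠ 0 := Nat.cast_ne_zero.mpr Fintype.card_ne_zero
  rw [trace_choiState_mul_kronecker, trace_mul_comm (E O), ← h_adj, inv_mul_eq_one₀ hdim,
    eq_comm (a := O), (h_pauli Ot hOt).eq_iff_trace_mul_eq_card hO, eq_comm]

theorem recoverable_iff_stabilizes_choi
    {ιP ιQ : Type*} [Fintype ιP] [DecidableEq ιP] [Fintype ιQ] [DecidableEq ιQ]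
    (E : Matrix (ιP → Fin 2) (ιP → Fin 2) ℂ →ₗ[ℂ] Matrix (ιQ → Fin 2) (ιQ → Fin 2) ℂ)
    (E' : Matrix (ιQ → Fin 2) (ιQ → Fin 2) ℂ →ₗ[ℂ] Matrix (ιP → Fin 2) (ιP → Fin 2) ℂ)
    -- E' is the adjoint E† of E with respect to the trace pairing
    (h_adj : ∀ X Y, (E' Y * X).trace = (Y * E X).trace)
    -- E is trace preserving (a channel)
    (h_tp : ∀ X, (E X).trace = X.trace)
    -- the adjoint maps Pauli operators to Pauli operators (stabilizer channel)
    (h_pauli : ∀ Y, IsPauli Y → IsPauli (E' Y))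
    (O : Matrix (ιP → Fin 2) (ιP → Fin 2) ℂ) (hO : IsPauli O)
    (Ot : Matrix (ιQ → Fin 2) (ιQ → Fin 2) ℂ) (hOt : IsPauli Ot) :
    O = E' Ot ↔ (choiState E * (Ot ⊗ₖ Oᵀ)).trace = 1 :=
  recoverable_iff_stabilizes_choi_general E E' h_adj h_pauli O hO Ot hOt

end Stmt9
end
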